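/- arXiv:2507.06641 — 2 statements merged into one kernel-verified Lean document; each statement's English description precedes it below -/
import Mathlib

section
/- In the special case γ = 1 of the singular Gronwall inequality: if b ≥ 0, α > 0, a(t) is nonnegative and locally integrable on [0,T), u is nonnegative and locally integrable on [0,T), and u(t) ≤ a(t) + b ∫_0^t (t-s)^{α-1} u(s) ds a.e. on (0,T), and moreover a ≡ 0, then u(t) = 0 for almost every t ∈ (0,T). -/
/-!
Weight by `exp (-σ t)`. Since `exp (-σ t) = exp (-σ (t - s)) * exp (-σ s)`, the weighted integral
of the convolution of the kernel `r ^ (α - 1)` (on `r > 0`) with `g` factors as the Laplace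
transform `σ ^ (-α) * Γ(α)` of the kernel times the weighted integral of `g`. For `σ` large,
`b * σ ^ (-α) * Γ(α) < 1`, so the weighted integral of `u` over `(0, c)` is at most a fraction of
itself, hence zero, for every `c < T`. Working with lower Lebesgue integrals in `ℝ≥0∞` lets
Tonelli and these comparisons go through without integrability side conditions.
-/

open MeasureTheory Set Filter Real
open scoped ENNReal Topology

noncomputable def riemannLiouvilleKernel (α : ℝ) : ℝ → ℝ≥0∞ :=
  (Ioi 0).indicator fun r => ENNReal.ofReal (r ^ (α - 1))

theorem measurable_riemannLiouvilleKernel (α : ℝ) : Measurable (riemannLiouvilleKernel α) :=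
  (Measurable.ennreal_ofReal (by fun_prop)).indicator measurableSet_Ioi

theorem lintegral_exp_mul_lintegral_sub_mul (σ : ℝ) {K g : ℝ → ℝ≥0∞} (hK : Measurable K)
    (hg : AEMeasurable g) :
    ∫⁻ t, ENNReal.ofReal (exp (-(σ * t))) * ∫⁻ s, K (t - s) * g s =
      (∫⁻ r, ENNReal.ofReal (exp (-(σ * r))) * K r) *
        ∫⁻ s, ENNReal.ofReal (exp (-(σ * s))) * g s := by
  set w : ℝ → ℝ≥0∞ := fun t => ENNReal.ofReal (exp (-(σ * t)))
  have hw : Measurable w := by fun_prop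
  have hwK : Measurable fun r => w r * K r := hw.mul hK
  have hw_add : ∀ r s, w (r + s) = w r * w s := fun r s => by
    simp only [w, mul_add, neg_add, exp_add, ENNReal.ofReal_mul (exp_pos _).le]
  calc ∫⁻ t, w t * ∫⁻ s, K (t - s) * g s = ∫⁻ t, ∫⁻ s, w t * K (t - s) * g s := by
        refine lintegral_congr fun t => ?_
        simp_rw [mul_assoc]
        exact (lintegral_const_mul' _ _ ENNReal.ofReal_ne_top).symm
    _ = ∫⁻ s, ∫⁻ t, w t * K (t - s) * g s :=
        lintegral_lintegral_swap (((hw.comp measurable_fst).mul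
          (hK.comp (measurable_fst.sub measurable_snd))).aemeasurable.mul hg.comp_snd)
    _ = ∫⁻ s, (∫⁻ r, w r * K r) * (w s * g s) := by
        refine lintegral_congr fun s => ?_
        rw [← lintegral_add_right_eq_self _ s, ← lintegral_mul_const _ hwK]
        refine lintegral_congr fun r => ?_
        rw [hw_add, add_sub_cancel_right]
        ring
    _ = (∫⁻ r, w r * K r) * ∫⁻ s, w s * g s :=
        lintegral_const_mul'' _ (hw.aemeasurable.mul hg)

theorem lintegral_exp_mul_riemannLiouvilleKernel {α σ : ℝ} (hα : 0 < α) (hσ : 0 < σ) :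
    ∫⁻ r, ENNReal.ofReal (exp (-(σ * r))) * riemannLiouvilleKernel α r =
      ENNReal.ofReal (σ ^ (-α) * Gamma α) := by
  have hint : IntegrableOn (fun r : ℝ => r ^ (α - 1) * exp (-(σ * r))) (Ioi 0) := by
    simpa [rpow_one] using integrableOn_rpow_mul_exp_neg_mul_rpow (p := 1) (s := α - 1)
      (by linarith) one_pos hσ
  calc ∫⁻ r, ENNReal.ofReal (exp (-(σ * r))) * riemannLiouvilleKernel α r
      = ∫⁻ r in Ioi 0, ENNReal.ofReal (r ^ (α - 1) * exp (-(σ * r))) := by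
        rw [← lintegral_indicator measurableSet_Ioi]
        refine lintegral_congr fun r => ?_
        by_cases hr : r ∈ Ioi 0
        · simp [riemannLiouvilleKernel, hr, ENNReal.ofReal_mul (rpow_nonneg (le_of_lt hr) _),
            mul_comm]
        · simp [riemannLiouvilleKernel, hr]
    _ = ENNReal.ofReal (σ ^ (-α) * Gamma α) := by
        rw [← ofReal_integral_eq_lintegral_ofReal hint, integral_rpow_mul_exp_neg_mul_Ioi hα hσ,
          one_div, inv_rpow hσ.le, rpow_neg hσ.le]
        filter_upwards [ae_restrict_mem measurableSet_Ioi] with r hr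
        exact mul_nonneg (rpow_nonneg (le_of_lt hr) _) (exp_pos _).le

theorem ae_eq_zero_of_le_lintegral_riemannLiouvilleKernel {g : ℝ → ℝ≥0∞} {b α : ℝ} (hα : 0 < α)
    (hg : AEMeasurable g) (hg_neg : ∀ t < 0, g t = 0) (hg_fin : ∫⁻ t, g t ≠ ∞)
    (h : ∀ᵐ t, g t ≤ ENNReal.ofReal b * ∫⁻ s, riemannLiouvilleKernel α (t - s) * g s) :
    g =ᵐ[volume] 0 := by
  obtain ⟨σ, hσ, hσ_small⟩ : ∃ σ : ℝ, 0 < σ ∧ b * (σ ^ (-α) * Gamma α) < 1 := by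
    have hlim : Tendsto (fun σ : ℝ => b * (σ ^ (-α) * Gamma α)) atTop (𝓝 0) := by
      simpa using ((tendsto_rpow_neg_atTop hα).mul_const (Gamma α)).const_mul b
    exact ((eventually_gt_atTop 0).and (hlim.eventually (gt_mem_nhds one_pos))).exists
  set w : ℝ → ℝ≥0∞ := fun t => ENNReal.ofReal (exp (-(σ * t)))
  set J := ∫⁻ t, w t * g t
  have hJ_fin : J ≠ ∞ := by
    refine ne_top_of_le_ne_top hg_fin (lintegral_mono fun t => ?_)
    rcases lt_or_ge t 0 with ht | ht
    · simp [hg_neg t ht]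
    · exact mul_le_of_le_one_left' (ENNReal.ofReal_le_one.2
        (exp_le_one_iff.2 (neg_nonpos.2 (mul_nonneg hσ.le ht))))
  have hJ_le : J ≤ ENNReal.ofReal (b * (σ ^ (-α) * Gamma α)) * J := calc
    J ≤ ∫⁻ t, w t * (ENNReal.ofReal b * ∫⁻ s, riemannLiouvilleKernel α (t - s) * g s) :=
        lintegral_mono_ae (h.mono fun t ht => by gcongr)
    _ = ENNReal.ofReal b * ∫⁻ t, w t * ∫⁻ s, riemannLiouvilleKernel α (t - s) * g s := by
        simp_rw [mul_left_comm (w _)]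
        exact lintegral_const_mul' _ _ ENNReal.ofReal_ne_top
    _ = ENNReal.ofReal (b * (σ ^ (-α) * Gamma α)) * J := by
        rw [lintegral_exp_mul_lintegral_sub_mul σ (measurable_riemannLiouvilleKernel α) hg,
          lintegral_exp_mul_riemannLiouvilleKernel hα hσ, ← mul_assoc,
          ← ENNReal.ofReal_mul' (by positivity)]
  have hJ : J = 0 := by
    by_contra hJ
    have hlt : J * ENNReal.ofReal (b * (σ ^ (-α) * Gamma α)) < J * 1 :=
      ENNReal.mul_lt_mul_right hJ hJ_fin (ENNReal.ofReal_lt_one.2 hσ_small)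
    rw [mul_one, mul_comm] at hlt
    exact hlt.not_ge hJ_le
  have hwg : (fun t => w t * g t) =ᵐ[volume] 0 :=
    (lintegral_eq_zero_iff' ((by fun_prop : Measurable w).aemeasurable.mul hg)).1 hJ
  filter_upwards [hwg] with t ht
  simpa [w, (exp_pos _).not_ge] using ht

theorem ofReal_intervalIntegral_le_lintegral_riemannLiouvilleKernel {α c t : ℝ} (u : ℝ → ℝ)
    (ht : 0 ≤ t) (htc : t ≤ c) :
    ENNReal.ofReal (∫ s in 0..t, (t - s) ^ (α - 1) * u s) ≤
      ∫⁻ s, riemannLiouvilleKernel α (t - s) * (Ioo 0 c).indicator (fun s => ‖u s‖ₑ) s := calc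
  ENNReal.ofReal (∫ s in 0..t, (t - s) ^ (α - 1) * u s)
      ≤ ‖∫ s in Ioc 0 t, (t - s) ^ (α - 1) * u s‖ₑ := by
        rw [intervalIntegral.integral_of_le ht]
        exact ofReal_le_enorm _
    _ ≤ ∫⁻ s in Ioo 0 t, ‖(t - s) ^ (α - 1) * u s‖ₑ := by
        rw [setLIntegral_congr Ioo_ae_eq_Ioc]
        exact enorm_integral_le_lintegral_enorm _
    _ = ∫⁻ s in Ioo 0 t,
          riemannLiouvilleKernel α (t - s) * (Ioo 0 c).indicator (fun s => ‖u s‖ₑ) s := by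
        refine setLIntegral_congr_fun measurableSet_Ioo fun s hs => ?_
        have hts : 0 < t - s := sub_pos.2 hs.2
        rw [riemannLiouvilleKernel, indicator_of_mem (mem_Ioi.2 hts),
          indicator_of_mem (show s ∈ Ioo 0 c from ⟨hs.1, hs.2.trans_le htc⟩), enorm_mul,
          Real.enorm_of_nonneg]
        exact rpow_nonneg hts.le _
    _ ≤ _ := setLIntegral_le_lintegral _ _

theorem ae_eq_zero_of_le_mul_intervalIntegral {b α c : ℝ} (hb : 0 ≤ b) (hα : 0 < α)
    {u : ℝ → ℝ} (hu0 : ∀ t ∈ Ioo 0 c, 0 ≤ u t) (hui : IntegrableOn u (Ioo 0 c))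
    (hineq : ∀ᵐ t, t ∈ Ioo 0 c → u t ≤ b * ∫ s in 0..t, (t - s) ^ (α - 1) * u s) :
    ∀ᵐ t, t ∈ Ioo 0 c → u t = 0 := by
  set g := (Ioo 0 c).indicator fun t => ‖u t‖ₑ
  have hg : g =ᵐ[volume] 0 := by
    refine ae_eq_zero_of_le_lintegral_riemannLiouvilleKernel (b := b) hα
      ((aemeasurable_indicator_iff measurableSet_Ioo).2 hui.aemeasurable.enorm)
      (fun t ht => indicator_of_notMem (fun h => (h.1.trans ht).false) _)
      (by rw [lintegral_indicator measurableSet_Ioo]; exact hui.2.ne) ?_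
    filter_upwards [hineq] with t ht
    by_cases htc : t ∈ Ioo 0 c
    · calc g t = ‖u t‖ₑ := indicator_of_mem htc _
        _ = ENNReal.ofReal (u t) := Real.enorm_of_nonneg (hu0 t htc)
        _ ≤ ENNReal.ofReal (b * ∫ s in 0..t, (t - s) ^ (α - 1) * u s) :=
            ENNReal.ofReal_le_ofReal (ht htc)
        _ ≤ _ := by
            rw [ENNReal.ofReal_mul hb]
            gcongr
            exact ofReal_intervalIntegral_le_lintegral_riemannLiouvilleKernel u htc.1.le htc.2.le
    · simp [g, indicator_of_notMem htc]
  filter_upwards [hg] with t ht htc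
  simpa [g, indicator_of_mem htc] using ht

theorem stmt3_general (T b α : ℝ) (hb : 0 ≤ b) (hα : 0 < α)
    (u : ℝ → ℝ)
    (hu0 : ∀ t ∈ Set.Ico (0:ℝ) T, 0 ≤ u t)
    (hui : LocallyIntegrableOn u (Set.Ico (0:ℝ) T))
    (hineq : ∀ᵐ t : ℝ, t ∈ Set.Ioo (0:ℝ) T →
      u t ≤ b * ∫ s in (0:ℝ)..t, (t - s) ^ (α - 1) * u s) :
    ∀ᵐ t : ℝ, t ∈ Set.Ioo (0:ℝ) T → u t = 0 := by
  have hc : ∀ c < T, ∀ᵐ t, t ∈ Ioo 0 c → u t = 0 := fun c hcT =>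
    ae_eq_zero_of_le_mul_intervalIntegral hb hα
      (fun t ht => hu0 t ⟨ht.1.le, ht.2.trans hcT⟩)
      ((hui.integrableOn_compact_subset (Icc_subset_Ico_right hcT) isCompact_Icc).mono_set
        Ioo_subset_Icc_self)
      (hineq.mono fun t ht htc => ht ⟨htc.1, htc.2.trans hcT⟩)
  have hq : ∀ᵐ t, ∀ q : ℚ, (q : ℝ) < T → t ∈ Ioo 0 (q : ℝ) → u t = 0 :=
    ae_all_iff.2 fun q => eventually_imp_distrib_left.2 (hc q)
  filter_upwards [hq] with t ht htT
  obtain ⟨q, htq, hqT⟩ := exists_rat_btwn htT.2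
  exact ht q hqT ⟨htT.1, htq⟩

theorem stmt3 (T b α : ℝ) (hT : 0 < T) (hb : 0 ≤ b) (hα : 0 < α)
    (u : ℝ → ℝ)
    (hu0 : ∀ t ∈ Set.Ico (0:ℝ) T, 0 ≤ u t)
    (hui : LocallyIntegrableOn u (Set.Ico (0:ℝ) T))
    (hineq : ∀ᵐ t : ℝ, t ∈ Set.Ioo (0:ℝ) T →
      u t ≤ b * ∫ s in (0:ℝ)..t, (t - s) ^ (α - 1) * u s) :
    ∀ᵐ t : ℝ, t ∈ Set.Ioo (0:ℝ) T → u t = 0 :=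
  stmt3_general T b α hb hα u hu0 hui hineq
end

section
/- Let q be a continuous function on [0,T] and 1 < α < 2. If y : [0,T] → ℝ is continuous and satisfies y(t) = -(1/Γ(α)) ∫_0^t (t-s)^{α-1} q(s) y(s) ds for all t ∈ [0,T], then y(t) = 0 for all t ∈ [0,T]. -/
/-! Since `α ≥ 1`, the kernel `(t - s) ^ (α - 1) q(s)` is bounded on `0 ≤ s ≤ t ≤ T`, so the
equation gives `|y t| ≤ K ∫₀ᵗ |y|` for a constant `K`. The primitive `F` of `|y|` then satisfies
`|F'| ≤ |K| |F|` and `F 0 = 0`, so Grönwall's inequality forces `F = 0`, hence `y = 0`. -/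

open Set Topology MeasureTheory intervalIntegral

theorem ContinuousOn.hasDerivWithinAt_integral_Ici {E : Type*} [NormedAddCommGroup E]
    [NormedSpace ℝ E] [CompleteSpace E] {u : ℝ → E} {a b x : ℝ}
    (hu : ContinuousOn u (Icc a b)) (hx : x ∈ Ico a b) :
    HasDerivWithinAt (fun t => ∫ s in a..t, u s) (u x) (Ici x) x := by
  have hIcc : Icc a b ∈ 𝓝[>] x := Icc_mem_nhdsGT_of_mem hx
  refine integral_hasDerivWithinAt_right (t := Ioi x) ?_
    ⟨_, hIcc, hu.aestronglyMeasurable measurableSet_Icc⟩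
    ((hu x (Ico_subset_Icc_self hx)).mono_of_mem_nhdsWithin hIcc)
  refine (hu.mono ?_).intervalIntegrable
  rw [uIcc_of_le hx.1]
  exact Icc_subset_Icc_right hx.2.le

theorem eq_zero_of_le_mul_integral {u : ℝ → ℝ} {K a b : ℝ} (hu : ContinuousOn u (Icc a b))
    (hu0 : ∀ t ∈ Icc a b, 0 ≤ u t) (hle : ∀ t ∈ Icc a b, u t ≤ K * ∫ s in a..t, u s) :
    ∀ t ∈ Icc a b, u t = 0 := by
  set F : ℝ → ℝ := fun t => ∫ s in a..t, u s
  have hF : ∀ t ∈ Icc a b, F t = 0 := by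
    refine eq_zero_of_abs_deriv_le_mul_abs_self_of_eq_zero_right (f' := u) (K := |K|) ?_
      (fun x hx => hu.hasDerivWithinAt_integral_Ici hx) integral_same ?_
    · exact (continuousOn_primitive hu.integrableOn_Icc).congr fun x hx => integral_of_le hx.1
    · intro x hx
      have hx' : x ∈ Icc a b := Ico_subset_Icc_self hx
      calc ‖u x‖ = u x := abs_of_nonneg (hu0 x hx')
        _ ≤ K * F x := hle x hx'
        _ ≤ |K| * ‖F x‖ := by rw [Real.norm_eq_abs, ← abs_mul]; exact le_abs_self _
  intro t ht
  refine le_antisymm ?_ (hu0 t ht)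
  simpa [F, hF t ht] using hle t ht

theorem abs_le_mul_integral_abs_of_eq_integral_kernel_mul {k : ℝ → ℝ → ℝ} {y : ℝ → ℝ}
    {c M a b : ℝ} (hkM : ∀ t ∈ Icc a b, ∀ s ∈ Ioc a t, |k t s| ≤ M)
    (hy : ContinuousOn y (Icc a b)) (heq : ∀ t ∈ Icc a b, y t = c * ∫ s in a..t, k t s * y s) :
    ∀ t ∈ Icc a b, |y t| ≤ |c| * M * ∫ s in a..t, |y s| := by
  intro t ht
  have hyt : IntervalIntegrable (fun s => |y s|) volume a t := by
    refine (hy.abs.mono ?_).intervalIntegrable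
    rw [uIcc_of_le ht.1]
    exact Icc_subset_Icc_right ht.2
  have hint : ‖∫ s in a..t, k t s * y s‖ ≤ ∫ s in a..t, M * |y s| :=
    norm_integral_le_of_norm_le ht.1
      (ae_of_all _ fun s hs => by
        rw [Real.norm_eq_abs, abs_mul]
        exact mul_le_mul_of_nonneg_right (hkM t ht s hs) (abs_nonneg _))
      (hyt.const_mul M)
  rw [heq t ht, abs_mul, mul_assoc, ← intervalIntegral.integral_const_mul]
  exact mul_le_mul_of_nonneg_left hint (abs_nonneg c)

theorem eq_zero_of_eq_integral_kernel_mul {k : ℝ → ℝ → ℝ} {y : ℝ → ℝ} {c M a b : ℝ}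
    (hkM : ∀ t ∈ Icc a b, ∀ s ∈ Ioc a t, |k t s| ≤ M) (hy : ContinuousOn y (Icc a b))
    (heq : ∀ t ∈ Icc a b, y t = c * ∫ s in a..t, k t s * y s) :
    ∀ t ∈ Icc a b, y t = 0 := fun t ht =>
  abs_eq_zero.mp <| eq_zero_of_le_mul_integral hy.abs (fun _ _ => abs_nonneg _)
    (abs_le_mul_integral_abs_of_eq_integral_kernel_mul hkM hy heq) t ht

theorem stmt4_general (T α : ℝ) (hα1 : 1 < α)
    (q y : ℝ → ℝ) (hq : ContinuousOn q (Set.Icc 0 T)) (hy : ContinuousOn y (Set.Icc 0 T))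
    (heq : ∀ t ∈ Set.Icc (0:ℝ) T,
      y t = -(1 / Real.Gamma α) * ∫ s in (0:ℝ)..t, (t - s) ^ (α - 1) * q s * y s) :
    ∀ t ∈ Set.Icc (0:ℝ) T, y t = 0 := by
  obtain ⟨C, hC⟩ := isCompact_Icc.exists_bound_of_continuousOn hq
  refine eq_zero_of_eq_integral_kernel_mul (k := fun t s => (t - s) ^ (α - 1) * q s)
    (M := T ^ (α - 1) * C) ?_ hy heq
  rintro t ⟨ht0, htT⟩ s ⟨hs0, hst⟩
  have hts : 0 ≤ t - s := sub_nonneg.2 hst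
  rw [abs_mul, abs_of_nonneg (Real.rpow_nonneg hts _)]
  exact mul_le_mul (Real.rpow_le_rpow hts (by linarith) (by linarith))
    (hC s ⟨hs0.le, hst.trans htT⟩) (abs_nonneg _) (Real.rpow_nonneg (ht0.trans htT) _)

theorem stmt4 (T α : ℝ) (hT : 0 < T) (hα1 : 1 < α) (hα2 : α < 2)
    (q y : ℝ → ℝ) (hq : ContinuousOn q (Set.Icc 0 T)) (hy : ContinuousOn y (Set.Icc 0 T))
    (heq : ∀ t ∈ Set.Icc (0:ℝ) T,
      y t = -(1 / Real.Gamma α) * ∫ s in (0:ℝ)..t, (t - s) ^ (α - 1) * q s * y s) :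
    ∀ t ∈ Set.Icc (0:ℝ) T, y t = 0 :=
  stmt4_general T α hα1 q y hq hy heq
end
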